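/- arXiv:1504.07850 — 3 statements merged into one kernel-verified Lean document; each statement's English description precedes it below -/
import Mathlib

section
/- Let n ≥ 2, λ > 2 and 0 < α ≤ n(λ−2)/2. Let ψ satisfy the size and Hölder conditions with constant C₀, let σ be a weight, f ∈ L²(σ), let Q, R be dyadic cubes and (x, t) ∈ W_R. Then ( ∫_{ℝⁿ} |ψ_t * ((Δ_Q^σ f) σ)(x−y)|² (t/(t+|y|))^{nλ} dy/tⁿ )^{1/2} ≤ C ℓ(R)^α (ℓ(R)+d(Q,R))^{−(n+α)} σ(Q)^{1/2} ‖Δ_Q^σ f‖_{L²(σ)}, where d(Q,R) = dist(Q,R) and C depends only on n, α, λ, C₀. -/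
open MeasureTheory Set
open scoped ENNReal NNReal BigOperators

noncomputable section

/-- Euclidean space `ℝⁿ`. -/
abbrev E (n : ℕ) := EuclideanSpace ℝ (Fin n)

/-- An axis-parallel cube in `ℝⁿ`, given by its corner and positive side length. -/
structure Cube (n : ℕ) where
  corner : E n
  side : ℝ
  side_pos : 0 < side

namespace Cube

/-- The (half-open) cube as a subset of `ℝⁿ`. -/
def set {n : ℕ} (Q : Cube n) : Set (E n) :=
  {x | ∀ i, Q.corner i ≤ x i ∧ x i < Q.corner i + Q.side}

/-- The Lebesgue measure `|Q| = ℓ(Q)ⁿ` of a cube. -/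
def vol {n : ℕ} (Q : Cube n) : ℝ := Q.side ^ n

/-- The cube concentric with `Q` with side length `C·ℓ(Q)`. -/
def dilate {n : ℕ} (Q : Cube n) (C : ℝ) : Set (E n) :=
  {x | ∀ i, Q.corner i + Q.side / 2 - C * Q.side / 2 ≤ x i ∧
        x i < Q.corner i + Q.side / 2 + C * Q.side / 2}

/-- Membership in the standard dyadic grid of `ℝⁿ`. -/
def IsDyadic {n : ℕ} (Q : Cube n) : Prop :=
  ∃ k : ℤ, ∃ m : Fin n → ℤ, Q.side = 2 ^ k ∧ ∀ i, Q.corner i = 2 ^ k * m i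

/-- The dyadic child of `Q` indexed by `ε ∈ {0,1}ⁿ`. -/
def child {n : ℕ} (Q : Cube n) (ε : Fin n → Bool) : Cube n :=
  ⟨WithLp.toLp 2 (fun i => Q.corner i + if ε i then Q.side / 2 else 0 : Fin n → ℝ), Q.side / 2,
    half_pos Q.side_pos⟩

end Cube

/-- Distance between two subsets of `ℝⁿ`. -/
def sdist {n : ℕ} (A B : Set (E n)) : ℝ := sInf (Set.image2 dist A B)

/-- A weight: a nonnegative locally integrable function on `ℝⁿ`. -/
def IsWeight {n : ℕ} (σ : E n → ℝ) : Prop :=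
  (∀ x, 0 ≤ σ x) ∧ MeasureTheory.LocallyIntegrable σ

/-- `σ(Q) = ∫_Q σ dx`. -/
def cInt {n : ℕ} (σ : E n → ℝ) (Q : Cube n) : ℝ := ∫ x in Q.set, σ x

/-- The square `𝒜₂²` of the two-weight A₂ constant, as an extended real. -/
def A2sq {n : ℕ} (σ w : E n → ℝ) : ℝ≥0∞ :=
  ⨆ Q : Cube n, ENNReal.ofReal ((cInt σ Q / Q.vol) * (cInt w Q / Q.vol))

/-- `P_t^α` applied to the measure `g dx` (`g` a possibly signed density):
`P_t^α(g dx)(y) = ∫ t^α (t² + |y−z|²)^{-(n+α)/2} g(z) dz`. -/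
def Pt (n : ℕ) (α : ℝ) (g : E n → ℝ) (y : E n) (t : ℝ) : ℝ :=
  ∫ z, t ^ α / (t ^ 2 + dist y z ^ 2) ^ (((n : ℝ) + α) / 2) * g z

/-- `P_t^α` applied to a positive measure `ν`. -/
def PtM (n : ℕ) (α : ℝ) (ν : Measure (E n)) (y : E n) (t : ℝ) : ℝ :=
  ∫ z, t ^ α / (t ^ 2 + dist y z ^ 2) ^ (((n : ℝ) + α) / 2) ∂ν

/-- `|∇P_t^α (g dx)(y,t)|²`, where `∇ = (∂_{y₁},…,∂_{yₙ},∂_t)`. -/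
def gradPSq (n : ℕ) (α : ℝ) (g : E n → ℝ) (y : E n) (t : ℝ) : ℝ :=
  (∑ i : Fin n,
      (deriv (fun s : ℝ => Pt n α g (y + s • EuclideanSpace.single i (1 : ℝ)) t) 0) ^ 2)
    + (deriv (fun s : ℝ => Pt n α g y s) t) ^ 2

/-- The square of the Littlewood–Paley function `g_λ^{*,α}(g dx)(x)`. -/
def gStarSq (n : ℕ) (α lam : ℝ) (g : E n → ℝ) (x : E n) : ℝ≥0∞ :=
  ∫⁻ y, ∫⁻ t in Set.Ioi (0 : ℝ),
    ENNReal.ofReal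
      ((t / (t + dist x y)) ^ ((n : ℝ) * lam) * gradPSq n α g y t / t ^ ((n : ℝ) - 1))

/-- `‖f‖²_{L²(σ)}` as an extended real. -/
def l2sq {n : ℕ} (σ f : E n → ℝ) : ℝ≥0∞ := ∫⁻ x, ENNReal.ofReal (f x ^ 2 * σ x)

/-- The square `ℬ²` of the testing constant, as an extended real. -/
def Bsq (n : ℕ) (α lam : ℝ) (σ w : E n → ℝ) : ℝ≥0∞ :=
  ⨆ Q : Cube n,
    (∫⁻ y, ∫⁻ t in Set.Ioc (0 : ℝ) Q.side, ∫⁻ x in Q.set,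
        ENNReal.ofReal ((t / (t + dist x y)) ^ ((n : ℝ) * lam)
          * gradPSq n α (Q.set.indicator σ) y t * w x / t ^ ((n : ℝ) - 1)))
      / ENNReal.ofReal (cInt σ Q)

/-- The two-weight norm inequality `‖g_λ^{*,α}(fσ)‖_{L²(w)} ≤ N ‖f‖_{L²(σ)}` (in squared form). -/
def OpBound (n : ℕ) (α lam : ℝ) (σ w : E n → ℝ) (N : ℝ) : Prop :=
  ∀ f : E n → ℝ, Measurable f → l2sq σ f < ⊤ →
    (∫⁻ x, gStarSq n α lam (fun z => f z * σ z) x * ENNReal.ofReal (w x))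
      ≤ ENNReal.ofReal (N ^ 2) * l2sq σ f

/-- The family `𝒞_α` of test functions for the intrinsic square function. -/
def CAlpha (n : ℕ) (α : ℝ) (φ : E n → ℝ) : Prop :=
  Function.support φ ⊆ Metric.closedBall 0 1 ∧ (∫ x, φ x) = 0 ∧
    ∀ x x' : E n, |φ x - φ x'| ≤ ‖x - x'‖ ^ α

/-- `A_α(g dx)(y,t) = sup_{φ ∈ 𝒞_α} |(g dx) * φ_t(y)|`. -/
def AIntr (n : ℕ) (α : ℝ) (g : E n → ℝ) (y : E n) (t : ℝ) : ℝ :=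
  ⨆ φ : {φ : E n → ℝ // CAlpha n α φ},
    |∫ z, t ^ (-(n : ℝ)) * φ.1 (t⁻¹ • (y - z)) * g z|

/-- The square of the intrinsic square function `g_{λ,α}^*(g dx)(x)`. -/
def gIntrSq (n : ℕ) (α lam : ℝ) (g : E n → ℝ) (x : E n) : ℝ≥0∞ :=
  ∫⁻ y, ∫⁻ t in Set.Ioi (0 : ℝ),
    ENNReal.ofReal
      ((t / (t + dist x y)) ^ ((n : ℝ) * lam) * AIntr n α g y t ^ 2 / t ^ ((n : ℝ) + 1))

/-- The square `ℬ_α²` of the intrinsic testing constant. -/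
def BIntrSq (n : ℕ) (α lam : ℝ) (σ w : E n → ℝ) : ℝ≥0∞ :=
  ⨆ Q : Cube n,
    (∫⁻ y, ∫⁻ t in Set.Ioc (0 : ℝ) Q.side, ∫⁻ x in Q.set,
        ENNReal.ofReal ((t / (t + dist x y)) ^ ((n : ℝ) * lam)
          * AIntr n α (Q.set.indicator σ) y t ^ 2 * w x / t ^ ((n : ℝ) + 1)))
      / ENNReal.ofReal (cInt σ Q)

/-- The two-weight norm inequality for the intrinsic square function (in squared form). -/
def OpBoundIntr (n : ℕ) (α lam : ℝ) (σ w : E n → ℝ) (N : ℝ) : Prop :=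
  ∀ f : E n → ℝ, Measurable f → l2sq σ f < ⊤ →
    (∫⁻ x, gIntrSq n α lam (fun z => f z * σ z) x * ENNReal.ofReal (w x))
      ≤ ENNReal.ofReal (N ^ 2) * l2sq σ f

/-- A dyadic cube `I` is good (w.r.t. parameters `r`, `γ`) if there is no dyadic `J` with
`ℓ(J) ≥ 2^r ℓ(I)` and `dist(I, ∂J) ≤ ℓ(I)^γ ℓ(J)^{1−γ}`. -/
def IsGood (n : ℕ) (r : ℕ) (γ : ℝ) (I : Cube n) : Prop :=
  ¬ ∃ J : Cube n, J.IsDyadic ∧ 2 ^ r * I.side ≤ J.side ∧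
      sdist I.set (frontier J.set) ≤ I.side ^ γ * J.side ^ (1 - γ)

/-- The defining conditions for the Whitney family `𝒲_I`. -/
def WhitneyPred (n : ℕ) (r : ℕ) (γ : ℝ) (I K : Cube n) : Prop :=
  K.IsDyadic ∧ K.set ⊆ I.set ∧ 2 ^ r * K.side ≤ I.side ∧
    K.side ^ γ * I.side ^ (1 - γ) ≤ sdist K.set (frontier I.set)

/-- `K ∈ 𝒲_I`: `K` is a maximal dyadic cube satisfying the Whitney conditions in `I`. -/
def InWhitney (n : ℕ) (r : ℕ) (γ : ℝ) (I K : Cube n) : Prop :=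
  WhitneyPred n r γ I K ∧
    ∀ K' : Cube n, WhitneyPred n r γ I K' → K.set ⊆ K'.set → K'.set = K.set

/-- The size and Hölder conditions on `ψ` with constant `C₀`. -/
def PsiCond (n : ℕ) (α C₀ : ℝ) (ψ : E n → ℝ) : Prop :=
  (∀ x : E n, |ψ x| ≤ C₀ * (1 + ‖x‖) ^ (-(n : ℝ) - α)) ∧
    ∀ x x' : E n, |ψ x - ψ x'| ≤ C₀ * ‖x - x'‖ ^ α * (1 + ‖x‖) ^ (-(n : ℝ) - α)

/-- `ψ_t * (g dx)(u) = ∫ t^{-n} ψ((u−z)/t) g(z) dz`. -/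
def psiConv (n : ℕ) (ψ : E n → ℝ) (t : ℝ) (g : E n → ℝ) (u : E n) : ℝ :=
  ∫ z, t ^ (-(n : ℝ)) * ψ (t⁻¹ • (u - z)) * g z

/-- The average `E_Q^σ f = σ(Q)⁻¹ ∫_Q f σ dx` (with the convention `0` if `σ(Q) = 0`). -/
def avg (n : ℕ) (σ f : E n → ℝ) (Q : Cube n) : ℝ :=
  (∫ x in Q.set, f x * σ x) / cInt σ Q

/-- The martingale difference `Δ_Q^σ f = Σ_{Q' child of Q} (E_{Q'}^σ f − E_Q^σ f) 1_{Q'}`. -/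
def mdiff (n : ℕ) (σ f : E n → ℝ) (Q : Cube n) (x : E n) : ℝ :=
  ∑ ε : Fin n → Bool,
    ((Q.child ε).set).indicator (fun _ => avg n σ f (Q.child ε) - avg n σ f Q) x

/-- The Poisson average `𝒫_α(K, g dx)` of a signed density `g`. -/
def poissonAvg (n : ℕ) (α : ℝ) (K : Cube n) (g : E n → ℝ) : ℝ :=
  ∫ x, K.side ^ α / (K.side + Metric.infDist x K.set) ^ ((n : ℝ) + α) * g x

/-- The Poisson average `𝒫_α(K, g dx)` of a nonnegative density `g`, as an extended real. -/
def poissonAvgD (n : ℕ) (α : ℝ) (K : Cube n) (g : E n → ℝ) : ℝ≥0∞ :=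
  ∫⁻ x, ENNReal.ofReal (K.side ^ α / (K.side + Metric.infDist x K.set) ^ ((n : ℝ) + α) * g x)

/-- The Poisson average `𝒫_α(K, ν)` of a positive measure `ν`. -/
def poissonAvgM (n : ℕ) (α : ℝ) (K : Cube n) (ν : Measure (E n)) : ℝ≥0∞ :=
  ∫⁻ x, ENNReal.ofReal (K.side ^ α / (K.side + Metric.infDist x K.set) ^ ((n : ℝ) + α)) ∂ν

/-! ### Auxiliary lemmas for Statement 9 -/

section Aux

open ENNReal

lemma cube_measurableSet {n : ℕ} (Q : Cube n) : MeasurableSet Q.set := by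
  have : Q.set = ⋂ i, ({x : E n | Q.corner i ≤ x i} ∩ {x : E n | x i < Q.corner i + Q.side}) := by
    ext x
    simp [Cube.set, Set.mem_iInter, forall_and]
  rw [this]
  exact MeasurableSet.iInter fun i =>
    (measurableSet_le measurable_const (by fun_prop : Measurable fun x : E n => x i)).inter
      (measurableSet_lt (f := fun x : E n => x i) (by fun_prop : Measurable fun x : E n => x i) measurable_const)

lemma cube_child_subset {n : ℕ} (Q : Cube n) (ε : Fin n → Bool) :
    (Q.child ε).set ⊆ Q.set := by
  intro x hx i
  have h := hx i
  simp only [Cube.child] at h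
  have hs : 0 < Q.side := Q.side_pos
  by_cases hε : ε i <;> simp [hε] at h <;> constructor <;> linarith [h.1, h.2]

lemma mdiff_eq_zero_of_not_mem {n : ℕ} (σ f : E n → ℝ) (Q : Cube n) {z : E n}
    (hz : z ∉ Q.set) : mdiff n σ f Q z = 0 := by
  unfold mdiff
  refine Finset.sum_eq_zero fun ε _ => ?_
  have : z ∉ (Q.child ε).set := fun h => hz (cube_child_subset Q ε h)
  simp [Set.indicator_of_notMem this]

lemma mdiff_measurable {n : ℕ} (σ f : E n → ℝ) (Q : Cube n) :
    Measurable (mdiff n σ f Q) := by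
  unfold mdiff
  exact Finset.measurable_sum _ fun ε _ =>
    Measurable.indicator measurable_const (cube_measurableSet _)

lemma mdiff_abs_le {n : ℕ} (σ f : E n → ℝ) (Q : Cube n) (z : E n) :
    |mdiff n σ f Q z| ≤ ∑ ε : Fin n → Bool, |avg n σ f (Q.child ε) - avg n σ f Q| := by
  refine (Finset.abs_sum_le_sum_abs _ _).trans (Finset.sum_le_sum fun ε _ => ?_)
  classical
  by_cases hz : z ∈ (Q.child ε).set
  · simp [Set.indicator_of_mem hz]
  · simp [Set.indicator_of_notMem hz, abs_nonneg]

lemma cube_subset_closedBall {n : ℕ} (Q : Cube n) :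
    Q.set ⊆ Metric.closedBall Q.corner (Real.sqrt n * Q.side) := by
  intro x hx
  have hs : 0 < Q.side := Q.side_pos
  have hcoord : ∀ i, ‖(x - Q.corner) i‖ ^ 2 ≤ Q.side ^ 2 := by
    intro i
    have h := hx i
    have h1 : |x i - Q.corner i| ≤ Q.side := by
      rw [abs_le]; constructor <;> linarith [h.1, h.2]
    have h2 : ‖(x - Q.corner) i‖ = |x i - Q.corner i| := by
      simp [Real.norm_eq_abs]
    rw [h2]
    have := abs_nonneg (x i - Q.corner i)
    nlinarith
  have hsum : (∑ i, ‖(x - Q.corner) i‖ ^ 2) ≤ (n : ℝ) * Q.side ^ 2 := by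
    calc (∑ i, ‖(x - Q.corner) i‖ ^ 2) ≤ ∑ _i : Fin n, Q.side ^ 2 :=
          Finset.sum_le_sum fun i _ => hcoord i
      _ = (n : ℝ) * Q.side ^ 2 := by simp [mul_comm]
  have hnorm : ‖x - Q.corner‖ ≤ Real.sqrt n * Q.side := by
    rw [EuclideanSpace.norm_eq]
    calc Real.sqrt (∑ i, ‖(x - Q.corner) i‖ ^ 2) ≤ Real.sqrt ((n : ℝ) * Q.side ^ 2) :=
          Real.sqrt_le_sqrt hsum
      _ = Real.sqrt n * Q.side := by
          rw [Real.sqrt_mul (Nat.cast_nonneg n), Real.sqrt_sq hs.le]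
  simpa [Metric.mem_closedBall, dist_eq_norm] using hnorm

lemma integrableOn_cube {n : ℕ} {σ : E n → ℝ} (hσ : MeasureTheory.LocallyIntegrable σ)
    (Q : Cube n) : MeasureTheory.IntegrableOn σ Q.set := by
  exact (hσ.integrableOn_isCompact (isCompact_closedBall _ _)).mono_set
    (cube_subset_closedBall Q)

lemma cube_nonempty {n : ℕ} (Q : Cube n) : Q.set.Nonempty :=
  ⟨Q.corner, fun i => ⟨le_refl _, by linarith [Q.side_pos]⟩⟩

lemma sdist_nonneg' {n : ℕ} {A B : Set (E n)} (hA : A.Nonempty) (hB : B.Nonempty) :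
    0 ≤ sdist A B := by
  refine le_csInf (Set.Nonempty.image2 hA hB) ?_
  rintro b ⟨u, hu, v, hv, rfl⟩
  exact dist_nonneg

lemma sdist_le_dist {n : ℕ} {A B : Set (E n)} {u v : E n} (hu : u ∈ A) (hv : v ∈ B) :
    sdist A B ≤ dist u v := by
  refine csInf_le ⟨0, ?_⟩ (Set.mem_image2_of_mem hu hv)
  rintro b ⟨u', hu', v', hv', rfl⟩
  exact dist_nonneg

/-- The normalization constant `κ_γ = ∫ (1+|w|)^{-γ} dw`. -/
noncomputable def kap (n : ℕ) (γ : ℝ) : ℝ := ∫ w : E n, ((1 : ℝ) + ‖w‖) ^ (-γ)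

lemma kap_nonneg (n : ℕ) (γ : ℝ) : 0 ≤ kap n γ :=
  MeasureTheory.integral_nonneg fun w => Real.rpow_nonneg (by positivity) _

end Aux


section Aux2

open ENNReal

lemma continuous_tker {n : ℕ} {t : ℝ} (ht : 0 < t) (v : E n) (P : ℝ) :
    Continuous fun y : E n => (t / (t + ‖v - y‖)) ^ P := by
  apply Continuous.rpow_const
  · exact continuous_const.div
      (continuous_const.add ((continuous_const.sub continuous_id).norm))
      (fun y => by positivity)
  · intro y; left; positivity

lemma lint_poisson_kernel {n : ℕ} {γ : ℝ} (hγ : (n : ℝ) < γ) {t : ℝ} (ht : 0 < t) (c : E n) :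
    ∫⁻ y : E n, ENNReal.ofReal ((t / (t + ‖y - c‖)) ^ γ)
      ≤ ENNReal.ofReal (kap n γ * t ^ (n : ℝ)) := by
  have key : ∀ y : E n, ((1:ℝ) + ‖t⁻¹ • y‖) ^ (-γ) = (t / (t + ‖y‖)) ^ γ := by
    intro y
    have h1 : ‖t⁻¹ • y‖ = ‖y‖ / t := by
      rw [norm_smul, Real.norm_eq_abs, abs_of_pos (inv_pos.mpr ht)]
      ring
    have h2 : (1:ℝ) + ‖y‖ / t = (t + ‖y‖) / t := by field_simp
    rw [h1, h2, Real.rpow_neg (by positivity), ← Real.inv_rpow (by positivity), inv_div]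
  have htrans : ∫⁻ y : E n, ENNReal.ofReal ((t / (t + ‖y - c‖)) ^ γ)
      = ∫⁻ y : E n, ENNReal.ofReal ((t / (t + ‖y‖)) ^ γ) := by
    have := lintegral_add_right_eq_self (μ := (volume : Measure (E n)))
      (fun y => ENNReal.ofReal ((t / (t + ‖y‖)) ^ γ)) (-c)
    simpa [sub_eq_add_neg] using this
  rw [htrans]
  have hg : Integrable (fun w : E n => ((1:ℝ) + ‖w‖) ^ (-γ)) := by
    apply integrable_one_add_norm
    rwa [finrank_euclideanSpace_fin]
  have hgc : Integrable (fun y : E n => ((1:ℝ) + ‖t⁻¹ • y‖) ^ (-γ)) :=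
    (integrable_comp_smul_iff volume (fun w : E n => ((1:ℝ) + ‖w‖) ^ (-γ))
      (inv_ne_zero ht.ne')).mpr hg
  have heq : ∫⁻ y : E n, ENNReal.ofReal ((t / (t + ‖y‖)) ^ γ)
      = ENNReal.ofReal (∫ y : E n, ((1:ℝ) + ‖t⁻¹ • y‖) ^ (-γ)) := by
    rw [ofReal_integral_eq_lintegral_ofReal hgc
      (Filter.Eventually.of_forall fun y => by positivity)]
    exact lintegral_congr fun y => by rw [key y]
  rw [heq]
  apply ENNReal.ofReal_le_ofReal
  have hcs := MeasureTheory.Measure.integral_comp_smul (volume : Measure (E n))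
    (fun w : E n => ((1:ℝ) + ‖w‖) ^ (-γ)) t⁻¹
  rw [hcs, finrank_euclideanSpace_fin, smul_eq_mul]
  have habs : |((t⁻¹) ^ n)⁻¹| = t ^ n := by
    rw [inv_pow, inv_inv, abs_of_pos (pow_pos ht n)]
  rw [habs, ← Real.rpow_natCast t n, mul_comm]
  exact le_of_eq (by rw [kap])

lemma core_ineq {t D U Y P γ : ℝ} (ht : 0 < t) (hD : 0 ≤ D) (hU : 0 ≤ U) (hY : 0 ≤ Y)
    (hsum : D ≤ U + Y) (hP : 0 ≤ P) (hPγ : P ≤ γ) :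
    (t / (t + U)) ^ P * (t / (t + Y)) ^ γ ≤
      (2 * t / (t + D)) ^ P * ((t / (t + U)) ^ P + (t / (t + Y)) ^ γ) := by
  have htU : 0 < t + U := by linarith
  have htY : 0 < t + Y := by linarith
  have htD : 0 < t + D := by linarith
  have ha0 : 0 < t / (t + U) := by positivity
  have hb0 : 0 < t / (t + Y) := by positivity
  rcases le_or_gt (D / 2) U with hc | hc
  · have hle : t / (t + U) ≤ 2 * t / (t + D) := by
      rw [div_le_div_iff₀ htU htD]; nlinarith [sq_nonneg t]
    calc (t/(t+U))^P * (t/(t+Y))^γ ≤ (2*t/(t+D))^P * (t/(t+Y))^γ :=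
          mul_le_mul_of_nonneg_right (Real.rpow_le_rpow ha0.le hle hP)
            (Real.rpow_nonneg hb0.le _)
      _ ≤ _ := mul_le_mul_of_nonneg_left
            (le_add_of_nonneg_left (Real.rpow_nonneg ha0.le _))
            (Real.rpow_nonneg (by positivity) _)
  · have hcY : D / 2 ≤ Y := by linarith
    have hle : t / (t + Y) ≤ 2 * t / (t + D) := by
      rw [div_le_div_iff₀ htY htD]; nlinarith [sq_nonneg t]
    have hb1 : t / (t + Y) ≤ 1 := by rw [div_le_one htY]; linarith
    have h1 : (t/(t+Y))^γ ≤ (t/(t+Y))^P := Real.rpow_le_rpow_of_exponent_ge hb0 hb1 hPγ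
    have h2 : (t/(t+Y))^P ≤ (2*t/(t+D))^P := Real.rpow_le_rpow hb0.le hle hP
    calc (t/(t+U))^P * (t/(t+Y))^γ ≤ (t/(t+U))^P * (2*t/(t+D))^P :=
          mul_le_mul_of_nonneg_left (h1.trans h2) (Real.rpow_nonneg ha0.le _)
      _ = (2*t/(t+D))^P * (t/(t+U))^P := mul_comm _ _
      _ ≤ _ := mul_le_mul_of_nonneg_left
            (le_add_of_nonneg_right (Real.rpow_nonneg hb0.le _))
            (Real.rpow_nonneg (by positivity) _)

lemma psi_kernel_bound {n : ℕ} {α C₀ : ℝ} {ψ : E n → ℝ} (hψ : PsiCond n α C₀ ψ)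
    {t : ℝ} (ht : 0 < t) (w : E n) :
    |t ^ (-(n : ℝ)) * ψ (t⁻¹ • w)| ≤ C₀ * (t ^ α / (t + ‖w‖) ^ ((n : ℝ) + α)) := by
  have htw : 0 < t + ‖w‖ := by positivity
  have h1 : |t ^ (-(n:ℝ)) * ψ (t⁻¹ • w)| = t ^ (-(n:ℝ)) * |ψ (t⁻¹ • w)| := by
    rw [abs_mul, abs_of_pos (Real.rpow_pos_of_pos ht _)]
  rw [h1]
  have hnorm : ‖t⁻¹ • w‖ = ‖w‖ / t := by
    rw [norm_smul, Real.norm_eq_abs, abs_of_pos (inv_pos.mpr ht)]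
    ring
  have h3 : ((1:ℝ) + ‖t⁻¹ • w‖) ^ (-(n:ℝ) - α) = t ^ ((n:ℝ)+α) / (t + ‖w‖) ^ ((n:ℝ)+α) := by
    rw [hnorm]
    have h2 : (1:ℝ) + ‖w‖/t = (t + ‖w‖)/t := by field_simp
    rw [h2, show -(n:ℝ) - α = -((n:ℝ)+α) by ring, Real.rpow_neg (by positivity),
      ← Real.inv_rpow (by positivity), inv_div, Real.div_rpow ht.le htw.le]
  have hpow : t ^ (-(n:ℝ)) * t ^ ((n:ℝ)+α) = t ^ α := by
    rw [← Real.rpow_add ht]; ring_nf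
  calc t ^ (-(n:ℝ)) * |ψ (t⁻¹ • w)|
      ≤ t ^ (-(n:ℝ)) * (C₀ * ((1:ℝ) + ‖t⁻¹ • w‖) ^ (-(n:ℝ) - α)) :=
        mul_le_mul_of_nonneg_left (hψ.1 (t⁻¹ • w)) (Real.rpow_nonneg ht.le _)
    _ = C₀ * (t ^ (-(n:ℝ)) * t ^ ((n:ℝ)+α) / (t + ‖w‖) ^ ((n:ℝ)+α)) := by
        rw [h3]; ring
    _ = C₀ * (t ^ α / (t + ‖w‖) ^ ((n:ℝ)+α)) := by rw [hpow]

end Aux2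

section Aux3

open ENNReal

lemma yintegral_bound {n : ℕ} {α lam : ℝ} (hn : 2 ≤ n) (hlam : 2 < lam) (hα0 : 0 < α)
    (hα : α ≤ n * (lam - 2) / 2) {t D : ℝ} (ht : 0 < t) (hD : 0 ≤ D)
    (v : E n) (hv : D ≤ ‖v‖) :
    ∫⁻ y : E n, ENNReal.ofReal
        ((t ^ α / (t + ‖v - y‖) ^ ((n : ℝ) + α)) ^ 2 *
          ((t / (t + ‖y‖)) ^ ((n : ℝ) * lam) / t ^ (n : ℝ)))
      ≤ ENNReal.ofReal
          ((2 ^ (2 * ((n:ℝ) + α)) * (kap n (2 * ((n:ℝ) + α)) + kap n ((n:ℝ) * lam)))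
            * (t ^ α / (t + D) ^ ((n : ℝ) + α)) ^ 2) := by
  set P : ℝ := 2 * ((n:ℝ) + α) with hPdef
  set γ : ℝ := (n:ℝ) * lam with hγdef
  have hn1 : (1:ℝ) ≤ (n:ℝ) := by exact_mod_cast le_trans (by norm_num) hn
  have hnP : (n:ℝ) < P := by rw [hPdef]; nlinarith
  have hnγ : (n:ℝ) < γ := by rw [hγdef]; nlinarith
  have hPγ : P ≤ γ := by rw [hPdef, hγdef]; nlinarith
  have hP0 : (0:ℝ) ≤ P := by positivity
  have htD : 0 < t + D := by linarith
  have htn : (0:ℝ) < t ^ (n:ℝ) := Real.rpow_pos_of_pos ht _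
  have ht2α : (0:ℝ) < t ^ (2*α) := Real.rpow_pos_of_pos ht _
  have htP : (0:ℝ) < t ^ P := Real.rpow_pos_of_pos ht _
  have htDP : (0:ℝ) < (t + D) ^ P := Real.rpow_pos_of_pos htD _
  set cc : ℝ := 2 ^ P * t ^ (2*α) / (t + D) ^ P / t ^ (n:ℝ) with hccdef
  have hcc : 0 ≤ cc := by positivity
  have pointwise : ∀ y : E n,
      (t ^ α / (t + ‖v - y‖) ^ ((n : ℝ) + α)) ^ 2 *
          ((t / (t + ‖y‖)) ^ γ / t ^ (n : ℝ))
        ≤ cc * ((t / (t + ‖v - y‖)) ^ P + (t / (t + ‖y‖)) ^ γ) := by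
    intro y
    set U : ℝ := ‖v - y‖ with hU
    set Y : ℝ := ‖y‖ with hY
    have hU0 : 0 ≤ U := norm_nonneg _
    have hY0 : 0 ≤ Y := norm_nonneg _
    have htU : 0 < t + U := by linarith
    have htY : 0 < t + Y := by linarith
    have hUY : D ≤ U + Y := by
      have : ‖v‖ ≤ U + Y := by
        calc ‖v‖ = ‖(v - y) + y‖ := by rw [sub_add_cancel]
          _ ≤ U + Y := norm_add_le _ _
      linarith
    have hcore := core_ineq ht hD hU0 hY0 hUY hP0 hPγ
    have hsq : ∀ s : ℝ, 0 < s → (s ^ ((n:ℝ) + α)) ^ 2 = s ^ P := by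
      intro s hs
      rw [sq, ← Real.rpow_add hs, hPdef]; ring_nf
    have htα2 : (t ^ α) ^ 2 = t ^ (2*α) := by
      rw [sq, ← Real.rpow_add ht]; ring_nf
    have hdivU : (t / (t + U)) ^ P = t ^ P / (t + U) ^ P := Real.div_rpow ht.le htU.le P
    have htUP : (0:ℝ) < (t + U) ^ P := Real.rpow_pos_of_pos htU _
    have eL : (t ^ α / (t + U) ^ ((n : ℝ) + α)) ^ 2 * ((t / (t + Y)) ^ γ / t ^ (n : ℝ))
        = (t ^ (2*α) / t ^ P / t ^ (n:ℝ)) * ((t / (t + U)) ^ P * (t / (t + Y)) ^ γ) := by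
      rw [div_pow, htα2, hsq _ htU, hdivU]
      field_simp
    have eR : (2 * t / (t + D)) ^ P = 2 ^ P * t ^ P / (t + D) ^ P := by
      rw [Real.div_rpow (by positivity) htD.le, Real.mul_rpow (by norm_num) ht.le]
    calc (t ^ α / (t + U) ^ ((n : ℝ) + α)) ^ 2 * ((t / (t + Y)) ^ γ / t ^ (n : ℝ))
        = (t ^ (2*α) / t ^ P / t ^ (n:ℝ)) * ((t / (t + U)) ^ P * (t / (t + Y)) ^ γ) := eL
      _ ≤ (t ^ (2*α) / t ^ P / t ^ (n:ℝ)) *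
            ((2 * t / (t + D)) ^ P * ((t / (t + U)) ^ P + (t / (t + Y)) ^ γ)) :=
          mul_le_mul_of_nonneg_left hcore (by positivity)
      _ = cc * ((t / (t + U)) ^ P + (t / (t + Y)) ^ γ) := by
          rw [eR, hccdef]
          field_simp
  have meas1 : Measurable fun y : E n => ENNReal.ofReal ((t / (t + ‖v - y‖)) ^ P) :=
    ENNReal.measurable_ofReal.comp (continuous_tker ht v P).measurable
  have int1 : ∫⁻ y : E n, ENNReal.ofReal ((t / (t + ‖v - y‖)) ^ P)
      ≤ ENNReal.ofReal (kap n P * t ^ (n:ℝ)) := by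
    have : ∀ y : E n, ‖v - y‖ = ‖y - v‖ := fun y => norm_sub_rev v y
    calc ∫⁻ y : E n, ENNReal.ofReal ((t / (t + ‖v - y‖)) ^ P)
        = ∫⁻ y : E n, ENNReal.ofReal ((t / (t + ‖y - v‖)) ^ P) :=
          lintegral_congr fun y => by rw [this y]
      _ ≤ _ := lint_poisson_kernel hnP ht v
  have int2 : ∫⁻ y : E n, ENNReal.ofReal ((t / (t + ‖y‖)) ^ γ)
      ≤ ENNReal.ofReal (kap n γ * t ^ (n:ℝ)) := by
    have := lint_poisson_kernel hnγ ht (0 : E n)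
    simpa using this
  calc ∫⁻ y : E n, ENNReal.ofReal
        ((t ^ α / (t + ‖v - y‖) ^ ((n : ℝ) + α)) ^ 2 *
          ((t / (t + ‖y‖)) ^ γ / t ^ (n : ℝ)))
      ≤ ∫⁻ y : E n, ENNReal.ofReal
          (cc * ((t / (t + ‖v - y‖)) ^ P + (t / (t + ‖y‖)) ^ γ)) :=
        lintegral_mono fun y => ENNReal.ofReal_le_ofReal (pointwise y)
    _ = ENNReal.ofReal cc * ∫⁻ y : E n,
          (ENNReal.ofReal ((t / (t + ‖v - y‖)) ^ P) + ENNReal.ofReal ((t / (t + ‖y‖)) ^ γ)) := by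
        rw [← lintegral_const_mul' _ _ ENNReal.ofReal_ne_top]
        refine lintegral_congr fun y => ?_
        rw [← ENNReal.ofReal_add (by positivity) (by positivity),
          ← ENNReal.ofReal_mul hcc]
    _ = ENNReal.ofReal cc * ((∫⁻ y : E n, ENNReal.ofReal ((t / (t + ‖v - y‖)) ^ P))
          + ∫⁻ y : E n, ENNReal.ofReal ((t / (t + ‖y‖)) ^ γ)) := by
        rw [lintegral_add_left meas1]
    _ ≤ ENNReal.ofReal cc *
          (ENNReal.ofReal (kap n P * t ^ (n:ℝ)) + ENNReal.ofReal (kap n γ * t ^ (n:ℝ))) :=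
        mul_le_mul_right (add_le_add int1 int2) _
    _ = ENNReal.ofReal (cc * (kap n P * t ^ (n:ℝ) + kap n γ * t ^ (n:ℝ))) := by
        rw [← ENNReal.ofReal_add (mul_nonneg (kap_nonneg _ _) htn.le)
          (mul_nonneg (kap_nonneg _ _) htn.le), ← ENNReal.ofReal_mul hcc]
    _ ≤ _ := by
        apply ENNReal.ofReal_le_ofReal
        apply le_of_eq
        have e2 : (t ^ α / (t + D) ^ ((n : ℝ) + α)) ^ 2 = t ^ (2*α) / (t + D) ^ P := by
          rw [div_pow, sq, ← Real.rpow_add ht, sq, ← Real.rpow_add htD, hPdef]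
          ring_nf
        rw [e2, hccdef]
        field_simp

end Aux3

set_option maxHeartbeats 2000000 in
/-- Elementary Estimate 1: for dyadic cubes `Q`, `R` and
`(x,t) ∈ W_R`,
`(∫ |ψ_t*((Δ_Q^σ f)σ)(x−y)|² (t/(t+|y|))^{nλ} dy/tⁿ)^{1/2}
  ≤ C ℓ(R)^α (ℓ(R)+d(Q,R))^{−(n+α)} σ(Q)^{1/2} ‖Δ_Q^σ f‖_{L²(σ)}`
(stated in squared form). -/
theorem elementary_estimate_one
    (n : ℕ) (hn : 2 ≤ n) (α lam : ℝ) (hlam : 2 < lam)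
    (hα0 : 0 < α) (hα : α ≤ n * (lam - 2) / 2) :
    ∀ C₀ : ℝ, 0 ≤ C₀ → ∃ C : ℝ, 0 < C ∧
      ∀ ψ : E n → ℝ, PsiCond n α C₀ ψ →
        ∀ σ : E n → ℝ, IsWeight σ → ∀ f : E n → ℝ, Measurable f → l2sq σ f < ⊤ →
          ∀ Q R : Cube n, Q.IsDyadic → R.IsDyadic →
            ∀ x ∈ R.set, ∀ t : ℝ, R.side / 2 < t → t ≤ R.side →
              (∫⁻ y : E n, ENNReal.ofReal
                  (psiConv n ψ t (fun z => mdiff n σ f Q z * σ z) (x - y) ^ 2 *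
                    (t / (t + ‖y‖)) ^ ((n : ℝ) * lam) / t ^ (n : ℝ)))
                ≤ ENNReal.ofReal
                    (C ^ 2 * (R.side ^ α / (R.side + sdist Q.set R.set) ^ ((n : ℝ) + α)) ^ 2 *
                      cInt σ Q * ∫ z, mdiff n σ f Q z ^ 2 * σ z) := by
  intro C₀ hC₀
  set P : ℝ := 2 * ((n:ℝ) + α) with hPdef
  set γ : ℝ := (n:ℝ) * lam with hγdef
  set κs : ℝ := kap n P + kap n γ with hκsdef
  have hκs0 : 0 ≤ κs := add_nonneg (kap_nonneg n P) (kap_nonneg n γ)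
  set C₁ : ℝ := 2 ^ P * κs with hC₁def
  have hC₁0 : 0 ≤ C₁ := mul_nonneg (Real.rpow_nonneg (by norm_num) _) hκs0
  refine ⟨(C₀ + 1) * 2 ^ P * Real.sqrt (κs + 1), ?_, ?_⟩
  · have h1 : (0:ℝ) < Real.sqrt (κs + 1) := Real.sqrt_pos.mpr (by linarith)
    have h2 : (0:ℝ) < (2:ℝ) ^ P := Real.rpow_pos_of_pos (by norm_num) _
    positivity
  intro ψ hψ σ hσw f hf hl2 Q R hQ hR x hx t ht1 ht2
  set C : ℝ := (C₀ + 1) * 2 ^ P * Real.sqrt (κs + 1) with hCdef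
  -- replace σ by a measurable nonnegative representative
  obtain ⟨σ', hσ'meas, hσ'0, hae⟩ :
      ∃ σ' : E n → ℝ, Measurable σ' ∧ (∀ z, 0 ≤ σ' z) ∧ σ =ᵐ[volume] σ' := by
    have hsm := hσw.2.aestronglyMeasurable
    refine ⟨fun z => max (hsm.mk σ z) 0,
      (hsm.stronglyMeasurable_mk.measurable.max measurable_const), fun z => le_max_right _ _, ?_⟩
    filter_upwards [hsm.ae_eq_mk] with z hz
    rw [← hz]
    exact (max_eq_left (hσw.1 z)).symm
  have hσ'loc : MeasureTheory.LocallyIntegrable σ' := by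
    intro x₀
    obtain ⟨s, hs, hint⟩ := hσw.2 x₀
    exact ⟨s, hs, hint.congr (ae_restrict_of_ae hae)⟩
  have havg : ∀ S : Cube n, avg n σ f S = avg n σ' f S := by
    intro S
    unfold avg cInt
    rw [integral_congr_ae (ae_restrict_of_ae
        (hae.mono fun z hz => show f z * σ z = f z * σ' z by rw [hz])),
      integral_congr_ae (ae_restrict_of_ae hae)]
  have hmd : mdiff n σ f Q = mdiff n σ' f Q := by
    funext z
    unfold mdiff
    simp only [havg]
  have hcQ : cInt σ Q = cInt σ' Q :=
    integral_congr_ae (ae_restrict_of_ae hae)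
  have hl2eq : (∫ z, mdiff n σ f Q z ^ 2 * σ z) = ∫ z, mdiff n σ' f Q z ^ 2 * σ' z := by
    rw [hmd]
    exact integral_congr_ae (hae.mono fun z hz => by simp only [hz])
  have hconv : ∀ u : E n, psiConv n ψ t (fun z => mdiff n σ f Q z * σ z) u
      = psiConv n ψ t (fun z => mdiff n σ' f Q z * σ' z) u := by
    intro u
    unfold psiConv
    rw [hmd]
    exact integral_congr_ae (hae.mono fun z hz => by simp only [hz])
  rw [show (∫⁻ y : E n, ENNReal.ofReal
      (psiConv n ψ t (fun z => mdiff n σ f Q z * σ z) (x - y) ^ 2 *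
        (t / (t + ‖y‖)) ^ γ / t ^ (n : ℝ)))
    = (∫⁻ y : E n, ENNReal.ofReal
      (psiConv n ψ t (fun z => mdiff n σ' f Q z * σ' z) (x - y) ^ 2 *
        (t / (t + ‖y‖)) ^ γ / t ^ (n : ℝ)))
    from lintegral_congr fun y => by rw [hconv], hcQ, hl2eq]
  clear hconv hl2eq hcQ hmd havg hae hσw hl2
  set h : E n → ℝ := mdiff n σ' f Q with hhdef
  have hhm : Measurable h := mdiff_measurable σ' f Q
  set D : ℝ := sdist Q.set R.set with hDdef
  set L : ℝ := R.side with hLdef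
  have hL0 : 0 < L := R.side_pos
  have ht0 : 0 < t := lt_trans (by linarith) ht1
  have hD0 : 0 ≤ D := sdist_nonneg' (cube_nonempty Q) ⟨x, hx⟩
  have hQmeas : MeasurableSet Q.set := cube_measurableSet Q
  have hQint : MeasureTheory.IntegrableOn σ' Q.set := integrableOn_cube hσ'loc Q
  have hhM : ∀ z, |h z| ≤ ∑ ε : Fin n → Bool, |avg n σ' f (Q.child ε) - avg n σ' f Q| :=
    fun z => mdiff_abs_le σ' f Q z
  set M : ℝ := ∑ ε : Fin n → Bool, |avg n σ' f (Q.child ε) - avg n σ' f Q| with hMdef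
  have hint2 : Integrable (fun z => h z ^ 2 * σ' z) := by
    have heq : (fun z => h z ^ 2 * σ' z) = Q.set.indicator (fun z => h z ^ 2 * σ' z) := by
      funext z
      by_cases hz : z ∈ Q.set
      · rw [Set.indicator_of_mem hz]
      · rw [Set.indicator_of_notMem hz, hhdef, mdiff_eq_zero_of_not_mem σ' f Q hz]
        ring
    rw [heq, MeasureTheory.integrable_indicator_iff hQmeas]
    refine Integrable.mono (hQint.const_mul (M ^ 2))
      (((hhm.pow_const 2).mul hσ'meas).aestronglyMeasurable.restrict) ?_
    refine ae_restrict_of_ae (Filter.Eventually.of_forall fun z => ?_)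
    have h1 : |h z| ≤ M := hhM z
    have h2 : (0:ℝ) ≤ M := le_trans (abs_nonneg _) h1
    rw [Real.norm_eq_abs, Real.norm_eq_abs, abs_mul, abs_mul]
    have h3 : |h z ^ 2| ≤ |M ^ 2| := by
      rw [abs_of_nonneg (sq_nonneg _), abs_of_nonneg (sq_nonneg _), ← sq_abs (h z)]
      nlinarith [mul_le_mul h1 h1 (abs_nonneg (h z)) h2]
    exact mul_le_mul_of_nonneg_right h3 (abs_nonneg _)
  have hIQall : ∫ z in Q.set, h z ^ 2 * σ' z ≤ ∫ z, h z ^ 2 * σ' z :=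
    MeasureTheory.setIntegral_le_integral hint2
      (Filter.Eventually.of_forall fun z => mul_nonneg (sq_nonneg _) (hσ'0 z))
  have hIQ0 : (0:ℝ) ≤ ∫ z in Q.set, h z ^ 2 * σ' z :=
    MeasureTheory.setIntegral_nonneg hQmeas fun z _ => mul_nonneg (sq_nonneg _) (hσ'0 z)
  have hcInt0 : (0:ℝ) ≤ cInt σ' Q :=
    MeasureTheory.setIntegral_nonneg hQmeas fun z _ => hσ'0 z
  set Bq : ℝ≥0∞ := ∫⁻ z in Q.set, ENNReal.ofReal (h z ^ 2 * σ' z) with hBqdef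
  have hBqval : Bq = ENNReal.ofReal (∫ z in Q.set, h z ^ 2 * σ' z) :=
    (MeasureTheory.ofReal_integral_eq_lintegral_ofReal hint2.integrableOn
      (ae_restrict_of_ae (Filter.Eventually.of_forall fun z =>
        mul_nonneg (sq_nonneg _) (hσ'0 z)))).symm
  have hBqne : Bq ≠ ⊤ := by rw [hBqval]; exact ENNReal.ofReal_ne_top
  set k : E n → ℝ := fun u => t ^ α / (t + ‖u‖) ^ ((n:ℝ) + α) with hkdef
  have hk0 : ∀ u, 0 ≤ k u := fun u =>
    div_nonneg (Real.rpow_nonneg ht0.le _) (Real.rpow_nonneg (by positivity) _)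
  have hkcont : Continuous k := by
    rw [hkdef]
    refine Continuous.div continuous_const ?_ (fun u => ?_)
    · refine Continuous.rpow_const (continuous_const.add continuous_norm) (fun u => ?_)
      left; positivity
    · positivity
  set A : E n → ℝ≥0∞ := fun y =>
    ∫⁻ z in Q.set, ENNReal.ofReal (C₀ ^ 2 * k (x - y - z) ^ 2 * σ' z) with hAdef
  set wgt : E n → ℝ≥0∞ := fun y =>
    ENNReal.ofReal ((t / (t + ‖y‖)) ^ γ / t ^ (n:ℝ)) with hwdef
  -- Step A : pointwise bound via Cauchy–Schwarz
  have stepA : ∀ y : E n,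
      ENNReal.ofReal (psiConv n ψ t (fun z => h z * σ' z) (x - y) ^ 2 *
          (t / (t + ‖y‖)) ^ γ / t ^ (n:ℝ))
        ≤ A y * Bq * wgt y := by
    intro y
    set Py : ℝ := psiConv n ψ t (fun z => h z * σ' z) (x - y) with hPydef
    have hmuldiv : Py ^ 2 * (t / (t + ‖y‖)) ^ γ / t ^ (n:ℝ)
        = Py ^ 2 * ((t / (t + ‖y‖)) ^ γ / t ^ (n:ℝ)) := by ring
    rw [hmuldiv, ENNReal.ofReal_mul (sq_nonneg _)]
    have key : ENNReal.ofReal (Py ^ 2) ≤ A y * Bq := by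
      have hmaj : ENNReal.ofReal |Py| ≤
          ∫⁻ z in Q.set, ENNReal.ofReal ((C₀ * k (x - y - z)) * (|h z| * σ' z)) := by
        have e0 : ENNReal.ofReal |Py| = (‖Py‖₊ : ℝ≥0∞) := by
          rw [← Real.norm_eq_abs, ofReal_norm, enorm_eq_nnnorm]
        rw [e0, hPydef]
        unfold psiConv
        refine le_trans (MeasureTheory.enorm_integral_le_lintegral_enorm _) ?_
        have hle : ∀ z : E n,
            (‖t ^ (-(n:ℝ)) * ψ (t⁻¹ • (x - y - z)) * (h z * σ' z)‖₊ : ℝ≥0∞)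
              ≤ ENNReal.ofReal ((C₀ * k (x - y - z)) * (|h z| * σ' z)) := by
          intro z
          rw [← enorm_eq_nnnorm, ← ofReal_norm]
          apply ENNReal.ofReal_le_ofReal
          rw [Real.norm_eq_abs, abs_mul]
          refine mul_le_mul (psi_kernel_bound hψ ht0 (x - y - z))
            (le_of_eq (by rw [abs_mul, abs_of_nonneg (hσ'0 z)])) (abs_nonneg _)
            (mul_nonneg hC₀ (hk0 _))
        calc ∫⁻ z, (‖t ^ (-(n:ℝ)) * ψ (t⁻¹ • (x - y - z)) * (h z * σ' z)‖₊ : ℝ≥0∞)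
            ≤ ∫⁻ z, ENNReal.ofReal ((C₀ * k (x - y - z)) * (|h z| * σ' z)) :=
              lintegral_mono hle
          _ = ∫⁻ z in Q.set, ENNReal.ofReal ((C₀ * k (x - y - z)) * (|h z| * σ' z)) := by
              rw [← lintegral_indicator hQmeas]
              refine lintegral_congr fun z => ?_
              by_cases hz : z ∈ Q.set
              · rw [Set.indicator_of_mem hz]
              · rw [Set.indicator_of_notMem hz, hhdef,
                  mdiff_eq_zero_of_not_mem σ' f Q hz]
                simp
      set f₁ : E n → ℝ≥0∞ :=
        fun z => ENNReal.ofReal (C₀ * k (x - y - z) * Real.sqrt (σ' z)) with hf₁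
      set f₂ : E n → ℝ≥0∞ := fun z => ENNReal.ofReal (|h z| * Real.sqrt (σ' z)) with hf₂
      have hm₁ : AEMeasurable f₁ (volume.restrict Q.set) := by
        apply Measurable.aemeasurable
        apply ENNReal.measurable_ofReal.comp
        have hc1 : Continuous fun z : E n => x - y - z := continuous_const.sub continuous_id
        have hc2 : Continuous fun z : E n => C₀ * k (x - y - z) :=
          continuous_const.mul (hkcont.comp hc1)
        exact hc2.measurable.mul (Real.continuous_sqrt.measurable.comp hσ'meas)
      have hm₂ : AEMeasurable f₂ (volume.restrict Q.set) := by
        apply Measurable.aemeasurable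
        exact ENNReal.measurable_ofReal.comp
          (hhm.abs.mul (Real.continuous_sqrt.measurable.comp hσ'meas))
      have hconj : Real.HolderConjugate 2 2 := Real.HolderConjugate.two_two
      have hCS := ENNReal.lintegral_mul_le_Lp_mul_Lq (volume.restrict Q.set) hconj hm₁ hm₂
      have hfg : ∀ z, (f₁ * f₂) z
          = ENNReal.ofReal ((C₀ * k (x - y - z)) * (|h z| * σ' z)) := by
        intro z
        have e : (C₀ * k (x - y - z) * Real.sqrt (σ' z)) * (|h z| * Real.sqrt (σ' z))
            = (C₀ * k (x - y - z)) * (|h z| * σ' z) := by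
          have hz := Real.mul_self_sqrt (hσ'0 z)
          linear_combination (C₀ * k (x - y - z) * |h z|) * hz
        show f₁ z * f₂ z = _
        rw [hf₁, hf₂, ← ENNReal.ofReal_mul
          (mul_nonneg (mul_nonneg hC₀ (hk0 _)) (Real.sqrt_nonneg _)), e]
      have hf₁sq : ∀ z, f₁ z ^ (2:ℝ)
          = ENNReal.ofReal (C₀ ^ 2 * k (x - y - z) ^ 2 * σ' z) := by
        intro z
        rw [hf₁, ENNReal.ofReal_rpow_of_nonneg
          (mul_nonneg (mul_nonneg hC₀ (hk0 _)) (Real.sqrt_nonneg _)) (by norm_num)]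
        congr 1
        rw [show ((2:ℝ)) = ((2:ℕ):ℝ) by norm_num, Real.rpow_natCast, mul_pow, mul_pow,
          Real.sq_sqrt (hσ'0 z)]
      have hf₂sq : ∀ z, f₂ z ^ (2:ℝ) = ENNReal.ofReal (h z ^ 2 * σ' z) := by
        intro z
        rw [hf₂, ENNReal.ofReal_rpow_of_nonneg
          (mul_nonneg (abs_nonneg _) (Real.sqrt_nonneg _)) (by norm_num)]
        congr 1
        rw [show ((2:ℝ)) = ((2:ℕ):ℝ) by norm_num, Real.rpow_natCast, mul_pow,
          Real.sq_sqrt (hσ'0 z), sq_abs]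
      have e1 : ∫⁻ z in Q.set, (f₁ * f₂) z
          = ∫⁻ z in Q.set, ENNReal.ofReal ((C₀ * k (x - y - z)) * (|h z| * σ' z)) :=
        lintegral_congr fun z => hfg z
      have e2 : ∫⁻ z in Q.set, f₁ z ^ (2:ℝ) = A y := by
        rw [hAdef]
        exact lintegral_congr fun z => hf₁sq z
      have e3 : ∫⁻ z in Q.set, f₂ z ^ (2:ℝ) = Bq := by
        rw [hBqdef]
        exact lintegral_congr fun z => hf₂sq z
      have habs2 : ENNReal.ofReal (Py ^ 2) = (ENNReal.ofReal |Py|) ^ 2 := by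
        rw [← sq_abs Py, ENNReal.ofReal_pow (abs_nonneg _)]
      rw [habs2]
      calc (ENNReal.ofReal |Py|) ^ 2
          ≤ (∫⁻ z in Q.set, ENNReal.ofReal ((C₀ * k (x - y - z)) * (|h z| * σ' z))) ^ 2 :=
            pow_le_pow_left' hmaj 2
        _ = (∫⁻ z in Q.set, (f₁ * f₂) z) ^ 2 := by rw [e1]
        _ ≤ ((∫⁻ z in Q.set, f₁ z ^ (2:ℝ)) ^ (1/(2:ℝ))
              * (∫⁻ z in Q.set, f₂ z ^ (2:ℝ)) ^ (1/(2:ℝ))) ^ 2 := pow_le_pow_left' hCS 2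
        _ = A y * Bq := by
            rw [e2, e3, mul_pow]
            congr 1 <;>
            · rw [← ENNReal.rpow_natCast _ 2, ← ENNReal.rpow_mul]
              norm_num
    calc ENNReal.ofReal (Py ^ 2) * wgt y ≤ (A y * Bq) * wgt y := mul_le_mul_left key _
      _ = A y * Bq * wgt y := rfl
  set cBig : ℝ≥0∞ :=
    ENNReal.ofReal (C₀^2 * C₁ * (t^α / (t+D) ^ ((n:ℝ)+α))^2) with hcBigdef
  have hCC₁X0 : (0:ℝ) ≤ C₀^2 * C₁ * (t^α / (t+D) ^ ((n:ℝ)+α))^2 :=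
    mul_nonneg (mul_nonneg (sq_nonneg _) hC₁0) (sq_nonneg _)
  have hcBigne : cBig ≠ ⊤ := by rw [hcBigdef]; exact ENNReal.ofReal_ne_top
  have stepE : ∀ z ∈ Q.set,
      (∫⁻ y : E n, ENNReal.ofReal
        (C₀^2 * k (x - y - z)^2 * σ' z * ((t/(t+‖y‖))^γ / t^(n:ℝ))))
        ≤ cBig * ENNReal.ofReal (σ' z) := by
    intro z hz
    have hvD : D ≤ ‖x - z‖ := by
      calc D ≤ dist z x := sdist_le_dist hz hx
        _ = ‖x - z‖ := by rw [dist_comm, dist_eq_norm]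
    have hre : ∀ y : E n, C₀^2 * k (x - y - z)^2 * σ' z * ((t/(t+‖y‖))^γ / t^(n:ℝ))
        = (C₀^2 * σ' z) *
            ((t^α/(t + ‖(x - z) - y‖)^((n:ℝ)+α))^2 * ((t/(t+‖y‖))^γ / t^(n:ℝ))) := by
      intro y
      rw [hkdef]
      simp only []
      rw [sub_right_comm x y z]
      ring
    calc (∫⁻ y : E n, ENNReal.ofReal
          (C₀^2 * k (x - y - z)^2 * σ' z * ((t/(t+‖y‖))^γ / t^(n:ℝ))))
        = ENNReal.ofReal (C₀^2 * σ' z) * ∫⁻ y : E n, ENNReal.ofReal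
            ((t^α/(t + ‖(x - z) - y‖)^((n:ℝ)+α))^2 * ((t/(t+‖y‖))^γ / t^(n:ℝ))) := by
          rw [← lintegral_const_mul' _ _ ENNReal.ofReal_ne_top]
          refine lintegral_congr fun y => ?_
          rw [← ENNReal.ofReal_mul (mul_nonneg (sq_nonneg _) (hσ'0 z)), hre y]
      _ ≤ ENNReal.ofReal (C₀^2 * σ' z)
            * ENNReal.ofReal (C₁ * (t^α / (t+D) ^ ((n:ℝ)+α))^2) := by
          refine mul_le_mul_right ?_ _
          exact yintegral_bound hn hlam hα0 hα ht0 hD0 (x - z) hvD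
      _ = cBig * ENNReal.ofReal (σ' z) := by
          rw [hcBigdef, ← ENNReal.ofReal_mul (mul_nonneg (sq_nonneg _) (hσ'0 z)),
            ← ENNReal.ofReal_mul hCC₁X0]
          congr 1
          ring
  have hswapmeas : Measurable (Function.uncurry fun (y z : E n) =>
      ENNReal.ofReal (C₀^2 * k (x - y - z)^2 * σ' z * ((t/(t+‖y‖))^γ / t^(n:ℝ)))) := by
    apply ENNReal.measurable_ofReal.comp
    have hc1 : Continuous fun p : E n × E n => C₀^2 * k (x - p.1 - p.2)^2 :=
      continuous_const.mul ((hkcont.comp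
        ((continuous_const.sub continuous_fst).sub continuous_snd)).pow 2)
    have hcw : Continuous fun y : E n => (t/(t+‖y‖))^γ / t^(n:ℝ) := by
      apply Continuous.div_const
      refine Continuous.rpow_const ?_ (fun y => Or.inl (by positivity))
      exact continuous_const.div (continuous_const.add continuous_norm)
        (fun y => by positivity)
    exact (hc1.measurable.mul (hσ'meas.comp measurable_snd)).mul
      (hcw.measurable.comp measurable_fst)
  -- the real-number final estimate
  have htD : 0 < t + D := by linarith
  have hLD : 0 < L + D := by linarith
  have hrealfinal : (∫ z in Q.set, h z^2*σ' z) *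
      (C₀^2 * C₁ * (t^α/(t+D)^((n:ℝ)+α))^2 * cInt σ' Q)
      ≤ C^2 * (L^α/(L+D)^((n:ℝ)+α))^2 * cInt σ' Q * ∫ z, h z^2*σ' z := by
    have hkey : t^α/(t+D)^((n:ℝ)+α) ≤ 2^((n:ℝ)+α) * (L^α/(L+D)^((n:ℝ)+α)) := by
      have h1 : t^α ≤ L^α := Real.rpow_le_rpow ht0.le ht2 hα0.le
      have h2 : (L+D)/2 ≤ t+D := by linarith
      have h3 : ((L+D)/2)^((n:ℝ)+α) ≤ (t+D)^((n:ℝ)+α) :=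
        Real.rpow_le_rpow (by positivity) h2 (by positivity)
      have h4 : ((L+D)/2)^((n:ℝ)+α) = (L+D)^((n:ℝ)+α)/2^((n:ℝ)+α) :=
        Real.div_rpow hLD.le (by norm_num) _
      have h5 : (0:ℝ) < (L+D)^((n:ℝ)+α) := Real.rpow_pos_of_pos hLD _
      have h7 : (0:ℝ) < (2:ℝ)^((n:ℝ)+α) := Real.rpow_pos_of_pos (by norm_num) _
      calc t^α/(t+D)^((n:ℝ)+α) ≤ L^α/((L+D)^((n:ℝ)+α)/2^((n:ℝ)+α)) :=
            div_le_div₀ (Real.rpow_nonneg hL0.le _) h1 (by positivity) (h4 ▸ h3)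
        _ = 2^((n:ℝ)+α) * (L^α/(L+D)^((n:ℝ)+α)) := by
            field_simp
    have hX2 : (t^α/(t+D)^((n:ℝ)+α))^2 ≤ 2^P * (L^α/(L+D)^((n:ℝ)+α))^2 := by
      have hnn : (0:ℝ) ≤ t^α/(t+D)^((n:ℝ)+α) := by positivity
      have hsqle := mul_self_le_mul_self hnn hkey
      have h7 : (0:ℝ) < (2:ℝ)^((n:ℝ)+α) := Real.rpow_pos_of_pos (by norm_num) _
      calc (t^α/(t+D)^((n:ℝ)+α))^2
          = (t^α/(t+D)^((n:ℝ)+α)) * (t^α/(t+D)^((n:ℝ)+α)) := sq _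
        _ ≤ (2^((n:ℝ)+α) * (L^α/(L+D)^((n:ℝ)+α)))
            * (2^((n:ℝ)+α) * (L^α/(L+D)^((n:ℝ)+α))) := hsqle
        _ = (2^((n:ℝ)+α) * 2^((n:ℝ)+α)) * (L^α/(L+D)^((n:ℝ)+α))^2 := by ring
        _ = 2^P * (L^α/(L+D)^((n:ℝ)+α))^2 := by
            rw [← Real.rpow_add (by norm_num : (0:ℝ) < 2),
              show (n:ℝ)+α+((n:ℝ)+α) = P from by rw [hPdef]; ring]
    have hC₀sq : C₀^2 ≤ (C₀+1)^2 := by nlinarith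
    have hCCfinal : C₀^2 * C₁ * 2^P ≤ C^2 := by
      have h2P : (0:ℝ) ≤ (2:ℝ)^P := Real.rpow_nonneg (by norm_num) _
      have hCsq : C^2 = (C₀+1)^2 * (2^P*2^P) * (κs+1) := by
        rw [hCdef, mul_pow, mul_pow, Real.sq_sqrt (by linarith : (0:ℝ) ≤ κs+1)]
        ring
      rw [hCsq, hC₁def]
      calc C₀^2 * (2^P*κs) * 2^P = (2^P*2^P) * (C₀^2 * κs) := by ring
        _ ≤ (2^P*2^P) * ((C₀+1)^2 * (κs+1)) := by
            refine mul_le_mul_of_nonneg_left ?_ (mul_nonneg h2P h2P)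
            exact mul_le_mul hC₀sq (by linarith) hκs0 (sq_nonneg _)
        _ = (C₀+1)^2 * (2^P*2^P) * (κs+1) := by ring
    have hY0 : (0:ℝ) ≤ (L^α/(L+D)^((n:ℝ)+α))^2 := sq_nonneg _
    calc (∫ z in Q.set, h z^2*σ' z) * (C₀^2*C₁*(t^α/(t+D)^((n:ℝ)+α))^2 * cInt σ' Q)
        = (C₀^2*C₁*(t^α/(t+D)^((n:ℝ)+α))^2) * cInt σ' Q * (∫ z in Q.set, h z^2*σ' z) := by
          ring
      _ ≤ (C₀^2*C₁*(2^P * (L^α/(L+D)^((n:ℝ)+α))^2)) * cInt σ' Q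
            * (∫ z in Q.set, h z^2*σ' z) := by
          refine mul_le_mul_of_nonneg_right (mul_le_mul_of_nonneg_right ?_ hcInt0) hIQ0
          exact mul_le_mul_of_nonneg_left hX2 (mul_nonneg (sq_nonneg _) hC₁0)
      _ = (C₀^2*C₁*2^P) * (L^α/(L+D)^((n:ℝ)+α))^2 * cInt σ' Q
            * (∫ z in Q.set, h z^2*σ' z) := by ring
      _ ≤ C^2 * (L^α/(L+D)^((n:ℝ)+α))^2 * cInt σ' Q * (∫ z in Q.set, h z^2*σ' z) := by
          refine mul_le_mul_of_nonneg_right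
            (mul_le_mul_of_nonneg_right (mul_le_mul_of_nonneg_right hCCfinal hY0) hcInt0) hIQ0
      _ ≤ C^2 * (L^α/(L+D)^((n:ℝ)+α))^2 * cInt σ' Q * ∫ z, h z^2*σ' z := by
          refine mul_le_mul_of_nonneg_left hIQall ?_
          exact mul_nonneg (mul_nonneg (sq_nonneg _) hY0) hcInt0
  -- main chain
  calc ∫⁻ y : E n, ENNReal.ofReal
        (psiConv n ψ t (fun z => h z * σ' z) (x - y) ^ 2 * (t/(t+‖y‖))^γ / t^(n:ℝ))
      ≤ ∫⁻ y : E n, A y * Bq * wgt y := lintegral_mono stepA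
    _ = ∫⁻ y : E n, Bq * (A y * wgt y) := lintegral_congr fun y => by ring
    _ = Bq * ∫⁻ y : E n, A y * wgt y := lintegral_const_mul' Bq _ hBqne
    _ = Bq * ∫⁻ y : E n, ∫⁻ z in Q.set, ENNReal.ofReal
          (C₀^2 * k (x - y - z)^2 * σ' z * ((t/(t+‖y‖))^γ / t^(n:ℝ))) := by
        congr 1
        refine lintegral_congr fun y => ?_
        rw [hAdef, hwdef]
        simp only []
        rw [← lintegral_mul_const' _ _ ENNReal.ofReal_ne_top]
        exact lintegral_congr fun z => (ENNReal.ofReal_mul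
          (mul_nonneg (mul_nonneg (sq_nonneg _) (sq_nonneg _)) (hσ'0 z))).symm
    _ = Bq * ∫⁻ z in Q.set, ∫⁻ y : E n, ENNReal.ofReal
          (C₀^2 * k (x - y - z)^2 * σ' z * ((t/(t+‖y‖))^γ / t^(n:ℝ))) := by
        congr 1
        exact lintegral_lintegral_swap hswapmeas.aemeasurable
    _ ≤ Bq * ∫⁻ z in Q.set, cBig * ENNReal.ofReal (σ' z) := by
        refine mul_le_mul_right ?_ _
        exact MeasureTheory.setLIntegral_mono
          (measurable_const.mul (ENNReal.measurable_ofReal.comp hσ'meas)) stepE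
    _ = Bq * (cBig * ENNReal.ofReal (cInt σ' Q)) := by
        rw [lintegral_const_mul' _ _ hcBigne]
        congr 2
        exact (MeasureTheory.ofReal_integral_eq_lintegral_ofReal hQint
          (ae_restrict_of_ae (Filter.Eventually.of_forall hσ'0))).symm
    _ = ENNReal.ofReal ((∫ z in Q.set, h z^2*σ' z) *
          (C₀^2 * C₁ * (t^α/(t+D)^((n:ℝ)+α))^2 * cInt σ' Q)) := by
        rw [hBqval, hcBigdef, ← ENNReal.ofReal_mul hCC₁X0,
          ← ENNReal.ofReal_mul hIQ0]
    _ ≤ ENNReal.ofReal (C^2 * (L^α/(L+D)^((n:ℝ)+α))^2 * cInt σ' Q * ∫ z, h z^2*σ' z) :=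
        ENNReal.ofReal_le_ofReal hrealfinal



end
end

section
/- Let n ≥ 2, α > 0 and γ = α/(2(n+α)). Let R ⊂ K be cubes in ℝⁿ with dist(R, ∂K) ≥ ℓ(R)^γ ℓ(K)^{1−γ}, and let z ∈ ℝⁿ \ K. Then ℓ(R)^α / (ℓ(R) + dist(z,R))^{n+α} ≤ C (ℓ(R)/ℓ(K))^{α/2} · ℓ(K)^α / (ℓ(K) + dist(z,K))^{n+α}, where C depends only on n and α. -/
open MeasureTheory Set
open scoped ENNReal NNReal BigOperators

noncomputable section

-- segment crossing lemma
lemma exists_frontier_dist {X : Type*} [NormedAddCommGroup X] [NormedSpace ℝ X]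
    {s : Set X} {x z : X} (hx : x ∈ s) (hz : z ∉ s) :
    ∃ y ∈ frontier s, dist x y ≤ dist x z := by
  have hseg : (segment ℝ x z ∩ frontier s).Nonempty := by
    by_contra h
    rw [Set.not_nonempty_iff_eq_empty] at h
    have hsub : segment ℝ x z ⊆ interior s ∪ interior sᶜ := by
      intro y hy
      have hy' : y ∈ (frontier s)ᶜ := fun hyf =>
        (by simpa [h] using Set.mem_inter hy hyf : (y:X) ∈ (∅ : Set X))
      rwa [compl_frontier_eq_union_interior] at hy'
    have hxint : x ∈ interior s := by
      have hxf : x ∉ frontier s := fun hf =>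
        (by simpa [h] using Set.mem_inter (left_mem_segment ℝ x z) hf : (x:X) ∈ (∅ : Set X))
      have := hsub (left_mem_segment ℝ x z)
      rcases this with h1 | h1
      · exact h1
      · exact absurd (interior_subset h1) (by simpa using hx)
    have : segment ℝ x z ⊆ interior s :=
      (convex_segment x z).isPreconnected.subset_left_of_subset_union isOpen_interior
        isOpen_interior
        (disjoint_compl_right.mono interior_subset interior_subset)
        hsub ⟨x, left_mem_segment ℝ x z, hxint⟩
    exact hz (interior_subset (this (right_mem_segment ℝ x z)))
  obtain ⟨y, hyseg, hyf⟩ := hseg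
  refine ⟨y, hyf, ?_⟩
  have := dist_add_dist_of_mem_segment hyseg
  nlinarith [dist_nonneg (x := y) (y := z)]

open Real in
lemma poisson_key (n : ℕ) (α a b dR dK : ℝ) (hα : 0 < α) (ha : 0 < a) (hb : 0 < b)
    (hab : a ≤ b) (hdK0 : 0 ≤ dK) (hdKR : dK ≤ dR)
    (hD : a ^ (α / (2 * ((n : ℝ) + α))) * b ^ (1 - α / (2 * ((n : ℝ) + α))) ≤ dR) :
    a ^ α / (a + dR) ^ ((n : ℝ) + α) ≤
      2 ^ ((n : ℝ) + α) * (a / b) ^ (α / 2) * (b ^ α / (b + dK) ^ ((n : ℝ) + α)) := by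
  have hnα : 0 < (n : ℝ) + α := by positivity
  set γ : ℝ := α / (2 * ((n : ℝ) + α)) with hγdef
  have hγ1 : γ * ((n : ℝ) + α) = α / 2 := by
    rw [hγdef, div_mul_eq_mul_div, div_eq_div_iff (by positivity) (by norm_num)]
    ring
  have hγ2 : (1 - γ) * ((n : ℝ) + α) = (n : ℝ) + α - α / 2 := by
    have : γ * ((n : ℝ) + α) = α / 2 := hγ1
    nlinarith [this]
  set A : ℝ := a ^ (α / 2) with hA
  set B : ℝ := b ^ (α / 2) with hB
  set P : ℝ := b ^ ((n : ℝ)) with hP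
  have hApos : 0 < A := rpow_pos_of_pos ha _
  have hBpos : 0 < B := rpow_pos_of_pos hb _
  have hPpos : 0 < P := rpow_pos_of_pos hb _
  have hAB : A ≤ B := rpow_le_rpow ha.le hab (by positivity)
  have haA : a ^ α = A ^ 2 := by
    rw [hA, ← rpow_natCast (a ^ (α/2)) 2, ← rpow_mul ha.le]
    norm_num
  have hbB : b ^ α = B ^ 2 := by
    rw [hB, ← rpow_natCast (b ^ (α/2)) 2, ← rpow_mul hb.le]
    norm_num
  have hbnα : b ^ ((n : ℝ) + α) = P * B ^ 2 := by
    rw [rpow_add hb, hbB, hP]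
  have hD0pos : 0 < a ^ γ * b ^ (1 - γ) := by positivity
  have hdRpos : 0 < dR := lt_of_lt_of_le hD0pos hD
  have hadR : 0 < (a + dR) ^ ((n : ℝ) + α) := rpow_pos_of_pos (by linarith) _
  have hbdK : 0 < (b + dK) ^ ((n : ℝ) + α) := rpow_pos_of_pos (by linarith) _
  have h2 : (0:ℝ) < 2 ^ ((n : ℝ) + α) := by positivity
  have hdiv : (a / b) ^ (α / 2) = A / B := by
    rw [div_rpow ha.le hb.le]
  rcases le_or_gt dK b with hcase | hcase
  · -- dK ≤ b
    have hD0nα : (a ^ γ * b ^ (1 - γ)) ^ ((n : ℝ) + α) = A * (P * B) := by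
      rw [mul_rpow (by positivity) (by positivity), ← rpow_mul ha.le, ← rpow_mul hb.le,
        hγ1, hγ2, rpow_sub hb, hbnα, ← hA, ← hB]
      field_simp
    have h1 : a ^ α / (a + dR) ^ ((n : ℝ) + α) ≤ a ^ α / (A * (P * B)) := by
      rw [← hD0nα]
      apply div_le_div_of_nonneg_left (by positivity) (by positivity)
      exact rpow_le_rpow hD0pos.le (by linarith) hnα.le
    have h2' : (b + dK) ^ ((n : ℝ) + α) ≤ 2 ^ ((n : ℝ) + α) * (P * B ^ 2) := by
      calc (b + dK) ^ ((n : ℝ) + α) ≤ (2 * b) ^ ((n : ℝ) + α) :=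
            rpow_le_rpow (by linarith) (by linarith) hnα.le
        _ = 2 ^ ((n : ℝ) + α) * (P * B ^ 2) := by
            rw [mul_rpow (by norm_num) hb.le, hbnα]
    have h3 : b ^ α / (2 ^ ((n : ℝ) + α) * (P * B ^ 2)) ≤ b ^ α / (b + dK) ^ ((n : ℝ) + α) :=
      div_le_div_of_nonneg_left (by positivity) hbdK h2'
    calc a ^ α / (a + dR) ^ ((n : ℝ) + α) ≤ a ^ α / (A * (P * B)) := h1
      _ = 2 ^ ((n : ℝ) + α) * (A / B) * (b ^ α / (2 ^ ((n : ℝ) + α) * (P * B ^ 2))) := by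
          rw [haA, hbB]; field_simp
      _ ≤ 2 ^ ((n : ℝ) + α) * (A / B) * (b ^ α / (b + dK) ^ ((n : ℝ) + α)) := by
          apply mul_le_mul_of_nonneg_left h3 (by positivity)
      _ = 2 ^ ((n : ℝ) + α) * (a / b) ^ (α / 2) * (b ^ α / (b + dK) ^ ((n : ℝ) + α)) := by
          rw [hdiv]
  · -- b < dK
    have h1 : (b + dK) ^ ((n : ℝ) + α) ≤ 2 ^ ((n : ℝ) + α) * (a + dR) ^ ((n : ℝ) + α) := by
      calc (b + dK) ^ ((n : ℝ) + α) ≤ (2 * (a + dR)) ^ ((n : ℝ) + α) :=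
            rpow_le_rpow (by linarith) (by linarith) hnα.le
        _ = 2 ^ ((n : ℝ) + α) * (a + dR) ^ ((n : ℝ) + α) := by
            rw [mul_rpow (by norm_num) (by linarith)]
    have h2' : a ^ α / (a + dR) ^ ((n : ℝ) + α)
        ≤ a ^ α * 2 ^ ((n : ℝ) + α) / (b + dK) ^ ((n : ℝ) + α) := by
      rw [div_le_div_iff₀ hadR hbdK]
      calc a ^ α * (b + dK) ^ ((n : ℝ) + α)
          ≤ a ^ α * (2 ^ ((n : ℝ) + α) * (a + dR) ^ ((n : ℝ) + α)) :=
            mul_le_mul_of_nonneg_left h1 (by positivity)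
        _ = a ^ α * 2 ^ ((n : ℝ) + α) * (a + dR) ^ ((n : ℝ) + α) := by ring
    calc a ^ α / (a + dR) ^ ((n : ℝ) + α)
        ≤ a ^ α * 2 ^ ((n : ℝ) + α) / (b + dK) ^ ((n : ℝ) + α) := h2'
      _ ≤ A * B * 2 ^ ((n : ℝ) + α) / (b + dK) ^ ((n : ℝ) + α) := by
          apply div_le_div_of_nonneg_right ?_ hbdK.le
          nlinarith [haA, hApos.le, hAB, h2.le, mul_le_mul_of_nonneg_left hAB hApos.le]
      _ = 2 ^ ((n : ℝ) + α) * (a / b) ^ (α / 2) * (b ^ α / (b + dK) ^ ((n : ℝ) + α)) := by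
          rw [hdiv, hbB]; field_simp

lemma cube_side_le_of_subset {n : ℕ} (hn : 0 < n) {R K : Cube n} (h : R.set ⊆ K.set) :
    R.side ≤ K.side := by
  have i : Fin n := ⟨0, hn⟩
  have hcorner : R.corner ∈ R.set := fun j => ⟨le_refl _, by linarith [R.side_pos]⟩
  have hc := h hcorner
  by_contra hlt
  push_neg at hlt
  set t : ℝ := K.corner i + K.side - R.corner i with ht
  have ht0 : 0 < t := by have := (hc i).2; simp only [Cube.set, Set.mem_setOf_eq] at this ⊢; linarith
  have htR : t < R.side := by have := (hc i).1; linarith [K.side_pos]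
  set x : E n := WithLp.toLp 2 (fun j => if j = i then R.corner i + t else R.corner j) with hx
  have hxR : x ∈ R.set := by
    intro j
    by_cases hj : j = i
    · subst hj
      constructor
      · show R.corner j ≤ x j
        simp [hx]; linarith
      · show x j < R.corner j + R.side
        simp [hx]; linarith
    · constructor
      · show R.corner j ≤ x j
        simp [hx, hj]
      · show x j < R.corner j + R.side
        simp [hx, hj]; linarith [R.side_pos]
  have hbad := (h hxR i).2
  have hxi : x i = R.corner i + t := by simp [hx]
  rw [hxi] at hbad
  simp only [ht] at hbad
  linarith


/-- Comparison of Poisson kernels: if `R ⊂ K`,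
`dist(R, ∂K) ≥ ℓ(R)^γ ℓ(K)^{1−γ}` with `γ = α/(2(n+α))` and `z ∉ K`, then
`ℓ(R)^α/(ℓ(R)+dist(z,R))^{n+α}
  ≤ C (ℓ(R)/ℓ(K))^{α/2} ℓ(K)^α/(ℓ(K)+dist(z,K))^{n+α}`. -/
theorem poisson_kernel_comparison
    (n : ℕ) (hn : 2 ≤ n) (α : ℝ) (hα : 0 < α) :
    ∃ C : ℝ, 0 < C ∧
      ∀ R K : Cube n, R.set ⊆ K.set →
        R.side ^ (α / (2 * ((n : ℝ) + α))) * K.side ^ (1 - α / (2 * ((n : ℝ) + α)))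
            ≤ sdist R.set (frontier K.set) →
        ∀ z : E n, z ∉ K.set →
          R.side ^ α / (R.side + Metric.infDist z R.set) ^ ((n : ℝ) + α)
            ≤ C * (R.side / K.side) ^ (α / 2) *
                (K.side ^ α / (K.side + Metric.infDist z K.set) ^ ((n : ℝ) + α)) := by
  have hn0 : 0 < n := by omega
  refine ⟨2 ^ ((n : ℝ) + α), by positivity, ?_⟩
  intro R K hRK hsd z hz
  have ha := R.side_pos
  have hb := K.side_pos
  have hab : R.side ≤ K.side := cube_side_le_of_subset hn0 hRK
  have hRne : R.set.Nonempty := ⟨R.corner, fun i => ⟨le_refl _, by linarith [R.side_pos]⟩⟩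
  have hdKR : Metric.infDist z K.set ≤ Metric.infDist z R.set :=
    Metric.infDist_le_infDist_of_subset hRK hRne
  have hdK0 : 0 ≤ Metric.infDist z K.set := Metric.infDist_nonneg
  have hD : R.side ^ (α / (2 * ((n : ℝ) + α))) * K.side ^ (1 - α / (2 * ((n : ℝ) + α)))
      ≤ Metric.infDist z R.set := by
    by_contra hlt
    push_neg at hlt
    obtain ⟨x, hxR, hxd⟩ := (Metric.infDist_lt_iff hRne).1 hlt
    obtain ⟨y, hyf, hxy⟩ := exists_frontier_dist (hRK hxR) hz
    have hsle : sdist R.set (frontier K.set) ≤ dist x y := by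
      apply csInf_le
      · refine ⟨0, ?_⟩
        rintro d ⟨p, hp, q, hq, rfl⟩
        exact dist_nonneg
      · exact Set.mem_image2_of_mem hxR hyf
    rw [dist_comm z x] at hxd
    linarith [le_trans hsd hsle]
  exact poisson_key n α R.side K.side _ _ hα ha hb hab hdK0 hdKR hD
end
end

section
/- Let n ≥ 2, α > 0 and γ = α/(2(n+α)). If Q, R are cubes in ℝⁿ with ℓ(Q) ≥ ℓ(R) and d(Q,R) > ℓ(R)^γ ℓ(Q)^{1−γ}, then ℓ(R)^α / (ℓ(R) + d(Q,R))^{n+α} ≤ C ℓ(Q)^{α/2} ℓ(R)^{α/2} / D(Q,R)^{n+α}, where d(Q,R) = dist(Q,R), D(Q,R) = ℓ(Q) + ℓ(R) + d(Q,R), and C depends only on n and α. -/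
open MeasureTheory Set
open scoped ENNReal NNReal BigOperators

noncomputable section

lemma separated_kernel_real (n α Q R d : ℝ) (hn : 0 < n) (hα : 0 < α)
    (hQ : 0 < Q) (hR : 0 < R) (hRQ : R ≤ Q)
    (hd : R ^ (α / (2 * (n + α))) * Q ^ (1 - α / (2 * (n + α))) < d) :
    R ^ α / (R + d) ^ (n + α)
      ≤ 3 ^ (n + α) * Q ^ (α / 2) * R ^ (α / 2) / (Q + R + d) ^ (n + α) := by
  have hd0 : 0 < d := lt_trans (by positivity) hd
  have hp : 0 < n + α := by linarith
  have hRd : 0 < R + d := by linarith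
  have hQRd : 0 < Q + R + d := by linarith
  rw [div_le_div_iff₀ (Real.rpow_pos_of_pos hRd _) (Real.rpow_pos_of_pos hQRd _)]
  have hRsplit : R ^ α = R ^ (α / 2) * R ^ (α / 2) := by
    rw [← Real.rpow_add hR]; norm_num
  have main : R ^ (α / 2) * (Q + R + d) ^ (n + α)
      ≤ 3 ^ (n + α) * Q ^ (α / 2) * (R + d) ^ (n + α) := by
    rcases le_total Q d with h | h
    · calc R ^ (α / 2) * (Q + R + d) ^ (n + α)
          ≤ Q ^ (α / 2) * (3 * (R + d)) ^ (n + α) := by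
            apply mul_le_mul (Real.rpow_le_rpow hR.le hRQ (by positivity))
              (Real.rpow_le_rpow hQRd.le (by linarith) hp.le)
              (Real.rpow_nonneg hQRd.le _) (Real.rpow_nonneg hQ.le _)
        _ = 3 ^ (n + α) * Q ^ (α / 2) * (R + d) ^ (n + α) := by
            rw [Real.mul_rpow (by norm_num) hRd.le]; ring
    · have h1 : (Q + R + d) ^ (n + α) ≤ (3 * Q) ^ (n + α) :=
        Real.rpow_le_rpow hQRd.le (by linarith) hp.le
      have h1' : (3 * Q) ^ (n + α) = 3 ^ (n + α) * Q ^ (n + α) :=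
        Real.mul_rpow (by norm_num) hQ.le
      have h2 : R ^ (α / 2) * Q ^ (n + α) ≤ Q ^ (α / 2) * (R + d) ^ (n + α) := by
        have hd2 : R ^ (α / (2 * (n + α))) * Q ^ (1 - α / (2 * (n + α))) ≤ R + d :=
          le_trans hd.le (by linarith)
        have h3 := Real.rpow_le_rpow (by positivity) hd2 hp.le
        rw [Real.mul_rpow (by positivity) (by positivity),
          ← Real.rpow_mul hR.le, ← Real.rpow_mul hQ.le] at h3
        have e1 : α / (2 * (n + α)) * (n + α) = α / 2 := by
          field_simp
        have e2 : (1 - α / (2 * (n + α))) * (n + α) = n + α - α / 2 := by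
          field_simp
        rw [e1, e2] at h3
        calc R ^ (α / 2) * Q ^ (n + α)
            = Q ^ (α / 2) * (R ^ (α / 2) * Q ^ (n + α - α / 2)) := by
              rw [← mul_assoc, mul_comm (Q ^ (α / 2)), mul_assoc,
                ← Real.rpow_add hQ]; ring_nf
          _ ≤ Q ^ (α / 2) * (R + d) ^ (n + α) :=
              mul_le_mul_of_nonneg_left h3 (Real.rpow_nonneg hQ.le _)
      calc R ^ (α / 2) * (Q + R + d) ^ (n + α)
          ≤ R ^ (α / 2) * (3 ^ (n + α) * Q ^ (n + α)) := by
            rw [← h1']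
            exact mul_le_mul_of_nonneg_left h1 (Real.rpow_nonneg hR.le _)
        _ = 3 ^ (n + α) * (R ^ (α / 2) * Q ^ (n + α)) := by ring
        _ ≤ 3 ^ (n + α) * (Q ^ (α / 2) * (R + d) ^ (n + α)) :=
            mul_le_mul_of_nonneg_left h2 (Real.rpow_nonneg (by norm_num) _)
        _ = 3 ^ (n + α) * Q ^ (α / 2) * (R + d) ^ (n + α) := by ring
  calc R ^ α * (Q + R + d) ^ (n + α)
      = R ^ (α / 2) * (R ^ (α / 2) * (Q + R + d) ^ (n + α)) := by
        rw [hRsplit]; ring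
    _ ≤ R ^ (α / 2) * (3 ^ (n + α) * Q ^ (α / 2) * (R + d) ^ (n + α)) :=
        mul_le_mul_of_nonneg_left main (Real.rpow_nonneg hR.le _)
    _ = 3 ^ (n + α) * Q ^ (α / 2) * R ^ (α / 2) * (R + d) ^ (n + α) := by ring

/-- For cubes with `ℓ(Q) ≥ ℓ(R)` and `d(Q,R) > ℓ(R)^γ ℓ(Q)^{1−γ}`
(`γ = α/(2(n+α))`):
`ℓ(R)^α/(ℓ(R)+d(Q,R))^{n+α} ≤ C ℓ(Q)^{α/2} ℓ(R)^{α/2} / D(Q,R)^{n+α}`. -/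
theorem separated_cubes_kernel_bound
    (n : ℕ) (hn : 2 ≤ n) (α : ℝ) (hα : 0 < α) :
    ∃ C : ℝ, 0 < C ∧
      ∀ Q R : Cube n, R.side ≤ Q.side →
        R.side ^ (α / (2 * ((n : ℝ) + α))) * Q.side ^ (1 - α / (2 * ((n : ℝ) + α)))
            < sdist Q.set R.set →
        R.side ^ α / (R.side + sdist Q.set R.set) ^ ((n : ℝ) + α)
          ≤ C * Q.side ^ (α / 2) * R.side ^ (α / 2) /
              (Q.side + R.side + sdist Q.set R.set) ^ ((n : ℝ) + α) := by
  have hn0 : (0 : ℝ) < n := by exact_mod_cast lt_of_lt_of_le (by norm_num) hn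
  exact ⟨3 ^ ((n : ℝ) + α), Real.rpow_pos_of_pos (by norm_num) _,
    fun Q R hRQ hd => separated_kernel_real n α Q.side R.side _ hn0 hα
      Q.side_pos R.side_pos hRQ hd⟩
end
end
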